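/- Let θ0, θt, θ1, θ∞, σ0t, σ1t be complex numbers and set pμ = 2cos(2πθμ) for μ ∈ {0,t,1,∞}, p0t = 2cos(2πσ0t), p1t = 2cos(2πσ1t). Denote by M_kk(G) the determinant of the 3×3 submatrix of G obtained by deleting row k and column k. Then M11(G) = −32·∏_{ε,ε'=±1} sin π(θ1 + εθ∞ + ε'σ0t), M22(G) = −32·∏_{ε,ε'=±1} sin π(θt + εθ1 + ε'σ1t), M33(G) = −32·∏_{ε,ε'=±1} sin π(θ0 + εθ∞ + ε'σ1t), and M44(G) = −32·∏_{ε,ε'=±1} sin π(θt + εθ0 + ε'σ0t). -/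

import Mathlib

/-!
Each diagonal minor of `G` is a symmetric 3×3 matrix with diagonal 2 whose off-diagonal entries are
`±2 cos 2A, ±2 cos 2B, ±2 cos 2C` with an even number of minus signs, so its determinant is
`-2 (x² + y² + z² - xyz - 4)` at `x = 2 cos 2A, y = 2 cos 2B, z = 2 cos 2C`. Applying the
product-to-sum formula to `sin (A+B+C) sin (A+B-C)` and to `sin (A-B+C) sin (A-B-C)` turns this
cubic into `16 sin (A+B+C) sin (A+B-C) sin (A-B+C) sin (A-B-C)`.
-/

open Complex Real

theorem Complex.two_mul_sin_mul_sin (x y : ℂ) :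
    2 * Complex.sin x * Complex.sin y = Complex.cos (x - y) - Complex.cos (x + y) := by
  rw [Complex.cos_sub, Complex.cos_add]; ring

theorem det_fin_three_two_diag {R : Type*} [CommRing R] (x y z : R) :
    !![2, x, y; x, 2, z; y, z, 2].det = -2 * (x ^ 2 + y ^ 2 + z ^ 2 - x * y * z - 4) := by
  rw [Matrix.det_fin_three]
  simp only [Matrix.of_apply, Matrix.cons_val', Matrix.cons_val_zero, Matrix.cons_val_fin_one,
    Matrix.cons_val_one, Matrix.cons_val]
  ring

theorem two_cos_cubic_eq_sixteen_mul_sin_prod (t a b c : ℂ) :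
    (2 * Complex.cos (2 * t * a)) ^ 2 + (2 * Complex.cos (2 * t * b)) ^ 2
      + (2 * Complex.cos (2 * t * c)) ^ 2
      - 2 * Complex.cos (2 * t * a) * (2 * Complex.cos (2 * t * b)) * (2 * Complex.cos (2 * t * c))
      - 4 =
    16 * (Complex.sin (t * (a + b + c)) * Complex.sin (t * (a + b - c)) *
      Complex.sin (t * (a - b + c)) * Complex.sin (t * (a - b - c))) := by
  have hplus : 2 * Complex.sin (t * (a + b + c)) * Complex.sin (t * (a + b - c)) =
      Complex.cos (2 * t * c) - Complex.cos (2 * t * a + 2 * t * b) := by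
    convert Complex.two_mul_sin_mul_sin _ _ using 3 <;> ring
  have hminus : 2 * Complex.sin (t * (a - b + c)) * Complex.sin (t * (a - b - c)) =
      Complex.cos (2 * t * c) - Complex.cos (2 * t * a - 2 * t * b) := by
    convert Complex.two_mul_sin_mul_sin _ _ using 3 <;> ring
  calc _ = 4 * ((Complex.cos (2 * t * c) - Complex.cos (2 * t * a + 2 * t * b)) *
          (Complex.cos (2 * t * c) - Complex.cos (2 * t * a - 2 * t * b))) := by
        rw [Complex.cos_add, Complex.cos_sub]
        linear_combination
          4 * (1 - Complex.cos (2 * t * b) ^ 2) * Complex.sin_sq_add_cos_sq (2 * t * a)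
            + 4 * Complex.sin (2 * t * a) ^ 2 * Complex.sin_sq_add_cos_sq (2 * t * b)
    _ = _ := by rw [← hplus, ← hminus]; ring

theorem diagonal_minors_of_G
    (θ0 θt θ1 θinf σ0t σ1t : ℂ) (p0 pt p1 pinf p0t p1t : ℂ)
    (hp0 : p0 = 2 * Complex.cos (2 * (π : ℂ) * θ0))
    (hpt : pt = 2 * Complex.cos (2 * (π : ℂ) * θt))
    (hp1 : p1 = 2 * Complex.cos (2 * (π : ℂ) * θ1))
    (hpinf : pinf = 2 * Complex.cos (2 * (π : ℂ) * θinf))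
    (hp0t : p0t = 2 * Complex.cos (2 * (π : ℂ) * σ0t))
    (hp1t : p1t = 2 * Complex.cos (2 * (π : ℂ) * σ1t))
    (G : Matrix (Fin 4) (Fin 4) ℂ)
    (hG : G = !![2, -p0, -pt, p1t;
                 -p0, 2, p0t, -pinf;
                 -pt, p0t, 2, -p1;
                 p1t, -pinf, -p1, 2]) :
    (G.submatrix (Fin.succAbove (0 : Fin 4)) (Fin.succAbove (0 : Fin 4))).det =
      -32 * (Complex.sin ((π : ℂ) * (θ1 + θinf + σ0t)) *
             Complex.sin ((π : ℂ) * (θ1 + θinf - σ0t)) *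
             Complex.sin ((π : ℂ) * (θ1 - θinf + σ0t)) *
             Complex.sin ((π : ℂ) * (θ1 - θinf - σ0t))) ∧
    (G.submatrix (Fin.succAbove (1 : Fin 4)) (Fin.succAbove (1 : Fin 4))).det =
      -32 * (Complex.sin ((π : ℂ) * (θt + θ1 + σ1t)) *
             Complex.sin ((π : ℂ) * (θt + θ1 - σ1t)) *
             Complex.sin ((π : ℂ) * (θt - θ1 + σ1t)) *
             Complex.sin ((π : ℂ) * (θt - θ1 - σ1t))) ∧
    (G.submatrix (Fin.succAbove (2 : Fin 4)) (Fin.succAbove (2 : Fin 4))).det =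
      -32 * (Complex.sin ((π : ℂ) * (θ0 + θinf + σ1t)) *
             Complex.sin ((π : ℂ) * (θ0 + θinf - σ1t)) *
             Complex.sin ((π : ℂ) * (θ0 - θinf + σ1t)) *
             Complex.sin ((π : ℂ) * (θ0 - θinf - σ1t))) ∧
    (G.submatrix (Fin.succAbove (3 : Fin 4)) (Fin.succAbove (3 : Fin 4))).det =
      -32 * (Complex.sin ((π : ℂ) * (θt + θ0 + σ0t)) *
             Complex.sin ((π : ℂ) * (θt + θ0 - σ0t)) *
             Complex.sin ((π : ℂ) * (θt - θ0 + σ0t)) *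
             Complex.sin ((π : ℂ) * (θt - θ0 - σ0t))) := by
  subst hG
  refine ⟨?_, ?_, ?_, ?_⟩
  · calc _ = !![2, p0t, -pinf; p0t, 2, -p1; -pinf, -p1, 2].det := by
          congr 1; ext i j; fin_cases i <;> fin_cases j <;> rfl
      _ = _ := by
          rw [det_fin_three_two_diag]; subst_vars
          linear_combination (-2) * two_cos_cubic_eq_sixteen_mul_sin_prod π θ1 θinf σ0t
  · calc _ = !![2, -pt, p1t; -pt, 2, -p1; p1t, -p1, 2].det := by
          congr 1; ext i j; fin_cases i <;> fin_cases j <;> rfl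
      _ = _ := by
          rw [det_fin_three_two_diag]; subst_vars
          linear_combination (-2) * two_cos_cubic_eq_sixteen_mul_sin_prod π θt θ1 σ1t
  · calc _ = !![2, -p0, p1t; -p0, 2, -pinf; p1t, -pinf, 2].det := by
          congr 1; ext i j; fin_cases i <;> fin_cases j <;> rfl
      _ = _ := by
          rw [det_fin_three_two_diag]; subst_vars
          linear_combination (-2) * two_cos_cubic_eq_sixteen_mul_sin_prod π θ0 θinf σ1t
  · calc _ = !![2, -p0, -pt; -p0, 2, p0t; -pt, p0t, 2].det := by
          congr 1; ext i j; fin_cases i <;> fin_cases j <;> rfl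
      _ = _ := by
          rw [det_fin_three_two_diag]; subst_vars
          linear_combination (-2) * two_cos_cubic_eq_sixteen_mul_sin_prod π θt θ0 σ0t
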